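/- arXiv:2508.13450 — 6 statements merged into one kernel-verified Lean document; each statement's English description precedes it below -/
import Mathlib

section
/- Suppose all N team members share the same cost function C : (ℝ^n)^N → ℝ, that C is convex and continuously differentiable on (ℝ^n)^N, and that each feasible set Ξ_i ⊆ ℝ^n is nonempty, compact and convex. Then every Nash equilibrium u◇ of the game in which each player i minimizes C over u_i ∈ Ξ_i is a team-optimal solution, i.e., C(u◇) ≤ C(u) for all u ∈ Ξ. -/
/-!
A Nash equilibrium `x` of the common-cost game satisfies, player by player, the first-order
condition `0 ≤ f' (Pi.single i (y i - x i))` for the derivative `f'` of the cost at `x`. Summing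
over the players gives `0 ≤ f' (y - x)` for every feasible `y`, and for a convex cost this
first-order condition already makes `x` a global minimiser on the product of the feasible sets.
-/

open Set Function

section FirstOrder

variable {E : Type*} [NormedAddCommGroup E] [NormedSpace ℝ E] {f : E → ℝ} {f' : StrongDual ℝ E}
  {s : Set E} {x y : E}

theorem IsMinOn.hasFDerivAt_sub_nonneg (hmin : IsMinOn f s x) (hs : Convex ℝ s)
    (hf : HasFDerivAt f f' x) (hx : x ∈ s) (hy : y ∈ s) : 0 ≤ f' (y - x) :=
  hmin.localize.hasFDerivWithinAt_nonneg hf.hasFDerivWithinAt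
    (sub_mem_posTangentConeAt_of_segment_subset (hs.segment_subset hx hy))

theorem ConvexOn.add_hasFDerivAt_sub_le (hconv : ConvexOn ℝ s f) (hf : HasFDerivAt f f' x)
    (hx : x ∈ s) (hy : y ∈ s) : f x + f' (y - x) ≤ f y := by
  set L : ℝ →ᵃ[ℝ] E := AffineMap.lineMap x y
  have hline : ConvexOn ℝ (L ⁻¹' s) (f ∘ L) := hconv.comp_affineMap L
  have hderiv : HasDerivAt (f ∘ L) (f' (y - x)) 0 :=
    (by simpa [L] using hf : HasFDerivAt f f' (L 0)).comp_hasDerivAt 0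
      AffineMap.hasDerivAt_lineMap
  have := hline.le_slope_of_hasDerivAt (x := 0) (y := 1) (by simpa [L] using hx)
    (by simpa [L] using hy) one_pos hderiv
  simp only [L, slope_def_field, comp_apply, AffineMap.lineMap_apply_zero,
    AffineMap.lineMap_apply_one, sub_zero, div_one] at this
  linarith

theorem IsMinOn.of_hasFDerivAt_sub_nonneg (hconv : ConvexOn ℝ s f) (hf : HasFDerivAt f f' x)
    (hx : x ∈ s) (hf' : ∀ y ∈ s, 0 ≤ f' (y - x)) : IsMinOn f s x :=
  isMinOn_iff.2 fun y hy => by linarith [hconv.add_hasFDerivAt_sub_le hf hx hy, hf' y hy]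

end FirstOrder

section Pi

variable {ι : Type*} [Fintype ι] [DecidableEq ι] {E : ι → Type*}
  [∀ i, NormedAddCommGroup (E i)] [∀ i, NormedSpace ℝ (E i)] {f : (Π i, E i) → ℝ}
  {f' : StrongDual ℝ (Π i, E i)} {s : ∀ i, Set (E i)} {x : Π i, E i}

theorem HasFDerivAt.comp_update (hf : HasFDerivAt f f' x) (i : ι) :
    HasFDerivAt (fun v => f (update x i v)) (f'.comp (.single ℝ E i)) (x i) := by
  have hsingle : ContinuousLinearMap.single ℝ E i = .pi (Pi.single i (.id ℝ (E i))) := by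
    ext v j
    by_cases hj : j = i
    · subst hj; simp
    · simp [hj]
  rw [hsingle]
  exact (by simpa using hf : HasFDerivAt f f' (update x i (x i))).comp (x i)
    (hasFDerivAt_update x (x i))

theorem HasFDerivAt.sub_nonneg_of_isMinOn_update (hf : HasFDerivAt f f' x)
    (hs : ∀ i, Convex ℝ (s i)) (hx : ∀ i, x i ∈ s i)
    (hmin : ∀ i, IsMinOn (fun v => f (update x i v)) (s i) (x i)) {y : Π i, E i}
    (hy : y ∈ univ.pi s) : 0 ≤ f' (y - x) := by
  rw [← f'.sum_comp_single]
  exact Finset.sum_nonneg fun i _ =>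
    (hmin i).hasFDerivAt_sub_nonneg (hs i) (hf.comp_update i) (hx i) (hy i trivial)

theorem ConvexOn.isMinOn_pi_of_isMinOn_update (hconv : ConvexOn ℝ (univ.pi s) f)
    (hf : HasFDerivAt f f' x) (hs : ∀ i, Convex ℝ (s i)) (hx : ∀ i, x i ∈ s i)
    (hmin : ∀ i, IsMinOn (fun v => f (update x i v)) (s i) (x i)) :
    IsMinOn f (univ.pi s) x :=
  .of_hasFDerivAt_sub_nonneg hconv hf (fun i _ => hx i) fun _ =>
    hf.sub_nonneg_of_isMinOn_update hs hx hmin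

end Pi

theorem NE_is_team_optimal_common_cost_general
    (n N : ℕ)
    (Ξ : Fin N → Set (EuclideanSpace ℝ (Fin n)))
    (C : (Fin N → EuclideanSpace ℝ (Fin n)) → ℝ)
    (hcvx : ∀ i, Convex ℝ (Ξ i))
    (hC_convex : ConvexOn ℝ Set.univ C)
    (hC_smooth : ContDiff ℝ 1 C)
    (ud : Fin N → EuclideanSpace ℝ (Fin n))
    (hud_mem : ∀ i, ud i ∈ Ξ i)
    (hud_NE : ∀ i, ∀ v ∈ Ξ i, C ud ≤ C (Function.update ud i v)) :
    ∀ u : Fin N → EuclideanSpace ℝ (Fin n), (∀ i, u i ∈ Ξ i) → C ud ≤ C u := by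
  have hmin : IsMinOn C (univ.pi Ξ) ud :=
    (hC_convex.subset (subset_univ _) (convex_pi fun i _ => hcvx i)).isMinOn_pi_of_isMinOn_update
      ((hC_smooth.differentiable one_ne_zero) ud).hasFDerivAt hcvx hud_mem
      fun i => isMinOn_iff.2 fun v hv => by simpa using hud_NE i v hv
  exact fun u hu => isMinOn_iff.1 hmin u fun i _ => hu i

/-- If all `N` team members share the same cost function `C`, which is convex
and continuously differentiable on `(ℝ^n)^N`, and each feasible set `Ξ i` is nonempty,
compact and convex, then every Nash equilibrium of the common-cost game is a team-optimal
solution. -/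
theorem NE_is_team_optimal_common_cost
    (n N : ℕ)
    (Ξ : Fin N → Set (EuclideanSpace ℝ (Fin n)))
    (C : (Fin N → EuclideanSpace ℝ (Fin n)) → ℝ)
    (hne : ∀ i, (Ξ i).Nonempty)
    (hcpt : ∀ i, IsCompact (Ξ i))
    (hcvx : ∀ i, Convex ℝ (Ξ i))
    (hC_convex : ConvexOn ℝ Set.univ C)
    (hC_smooth : ContDiff ℝ 1 C)
    (ud : Fin N → EuclideanSpace ℝ (Fin n))
    (hud_mem : ∀ i, ud i ∈ Ξ i)
    (hud_NE : ∀ i, ∀ v ∈ Ξ i, C ud ≤ C (Function.update ud i v)) :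
    ∀ u : Fin N → EuclideanSpace ℝ (Fin n), (∀ i, u i ∈ Ξ i) → C ud ≤ C u :=
  NE_is_team_optimal_common_cost_general n N Ξ C hcvx hC_convex hC_smooth ud hud_mem hud_NE
end

section
/- Let C : (ℝ^n)^N → ℝ be convex and continuously differentiable, let each individual cost C_i : (ℝ^n)^N → ℝ be continuously differentiable, and let each feasible set Ξ_i ⊆ ℝ^n be nonempty, compact and convex. Suppose the alignment condition holds: for every i, every profile u ∈ (ℝ^n)^N, and every unilateral deviation u_i' ∈ ℝ^n, C(u_i', u_{-i}) − C(u) = C_i(u_i', u_{-i}) − C_i(u). Then every Nash equilibrium u◇ of the game with costs C_1, …, C_N is a team-optimal solution, i.e., C(u◇) ≤ C(u) for all u ∈ Ξ. -/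
/-! By alignment, a Nash equilibrium is a coordinatewise minimizer of the team cost `C`. At a
coordinatewise minimizer over a product of convex sets, each partial derivative of `C` is
nonnegative in every feasible direction; summing over the members, so is the full derivative in
the direction of any feasible profile. For convex `C` the first-order bound
`C u - C ud ≥ DC(ud) (u - ud)` then makes `ud` a global minimizer. -/

open Set

theorem ConvexOn.apply_sub_le_sub_of_hasFDerivAt {E : Type*} [NormedAddCommGroup E]
    [NormedSpace ℝ E] {s : Set E} {f : E → ℝ} {f' : E →L[ℝ] ℝ} {x y : E}
    (hf : ConvexOn ℝ s f) (hx : x ∈ s) (hy : y ∈ s) (hf' : HasFDerivAt f f' x) :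
    f' (y - x) ≤ f y - f x := by
  let line : ℝ →ᵃ[ℝ] E := AffineMap.lineMap x y
  have hconv : ConvexOn ℝ (line ⁻¹' s) (f ∘ line) := hf.comp_affineMap line
  have hderiv : HasDerivAt (f ∘ line) (f' (y - x)) 0 :=
    (by simpa [line] using hf' : HasFDerivAt f f' (line 0)).comp_hasDerivAt 0
      AffineMap.hasDerivAt_lineMap
  simpa [line, slope_def_field] using
    hconv.le_slope_of_hasDerivAt (x := 0) (y := 1) (by simpa [line] using hx)
      (by simpa [line] using hy) one_pos hderiv

theorem IsMinOn.hasFDerivAt_nonneg_of_convex {E : Type*} [NormedAddCommGroup E]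
    [NormedSpace ℝ E] {s : Set E} {f : E → ℝ} {f' : E →L[ℝ] ℝ} {x y : E}
    (hmin : IsMinOn f s x) (hs : Convex ℝ s) (hx : x ∈ s) (hy : y ∈ s)
    (hf' : HasFDerivAt f f' x) : 0 ≤ f' (y - x) :=
  hmin.localize.hasFDerivWithinAt_nonneg hf'.hasFDerivWithinAt
    (sub_mem_posTangentConeAt_of_segment_subset (hs.segment_subset hx hy))

section Pi

variable {ι : Type*} [Fintype ι] [DecidableEq ι] {E : ι → Type*}
  [∀ i, NormedAddCommGroup (E i)] [∀ i, NormedSpace ℝ (E i)]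

theorem HasFDerivAt.apply_sub_nonneg_of_le_update {f : (∀ i, E i) → ℝ}
    {f' : (∀ i, E i) →L[ℝ] ℝ} {s : ∀ i, Set (E i)} {x y : ∀ i, E i}
    (hf' : HasFDerivAt f f' x) (hs : ∀ i, Convex ℝ (s i)) (hx : x ∈ univ.pi s)
    (hy : y ∈ univ.pi s) (hmin : ∀ i, ∀ v ∈ s i, f x ≤ f (Function.update x i v)) :
    0 ≤ f' (y - x) := by
  rw [← f'.sum_comp_single (v := y - x)]
  refine Finset.sum_nonneg fun i _ => ?_
  have hupdate : HasFDerivAt (f ∘ Function.update x i) (f'.comp (.single ℝ E i)) (x i) := by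
    have hf'_i : HasFDerivAt f f' (Function.update x i (x i)) := by simpa using hf'
    have hsingle : ContinuousLinearMap.pi (Pi.single i (.id ℝ (E i))) = .single ℝ E i := by
      ext v j
      rcases eq_or_ne j i with rfl | hji <;> simp [*]
    simpa [hsingle] using hf'_i.comp (x i) (hasFDerivAt_update x (x i))
  have hmin_i : IsMinOn (f ∘ Function.update x i) (s i) (x i) := fun v hv => by
    simpa using hmin i v hv
  exact hmin_i.hasFDerivAt_nonneg_of_convex (hs i) (hx i trivial) (hy i trivial) hupdate

theorem ConvexOn.isMinOn_pi_of_le_update {f : (∀ i, E i) → ℝ} {s : ∀ i, Set (E i)}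
    {x : ∀ i, E i} (hf : ConvexOn ℝ (univ.pi s) f) (hfx : DifferentiableAt ℝ f x)
    (hs : ∀ i, Convex ℝ (s i)) (hx : x ∈ univ.pi s)
    (hmin : ∀ i, ∀ v ∈ s i, f x ≤ f (Function.update x i v)) :
    IsMinOn f (univ.pi s) x := fun _ hy =>
  sub_nonneg.mp <| (hfx.hasFDerivAt.apply_sub_nonneg_of_le_update hs hx hy hmin).trans
    (hf.apply_sub_le_sub_of_hasFDerivAt hx hy hfx.hasFDerivAt)

end Pi

theorem NE_is_team_optimal_aligned_general
    (n N : ℕ)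
    (Ξ : Fin N → Set (EuclideanSpace ℝ (Fin n)))
    (C : (Fin N → EuclideanSpace ℝ (Fin n)) → ℝ)
    (Ci : Fin N → (Fin N → EuclideanSpace ℝ (Fin n)) → ℝ)
    (hC_convex : ConvexOn ℝ Set.univ C)
    (hC_smooth : ContDiff ℝ 1 C)
    (hcvx : ∀ i, Convex ℝ (Ξ i))
    (halign : ∀ i (u : Fin N → EuclideanSpace ℝ (Fin n)) (v : EuclideanSpace ℝ (Fin n)),
      C (Function.update u i v) - C u = Ci i (Function.update u i v) - Ci i u)
    (ud : Fin N → EuclideanSpace ℝ (Fin n))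
    (hud_mem : ∀ i, ud i ∈ Ξ i)
    (hud_NE : ∀ i, ∀ v ∈ Ξ i, Ci i ud ≤ Ci i (Function.update ud i v)) :
    ∀ u : Fin N → EuclideanSpace ℝ (Fin n), (∀ i, u i ∈ Ξ i) → C ud ≤ C u := by
  intro u hu
  have hmin : ∀ i, ∀ v ∈ Ξ i, C ud ≤ C (Function.update ud i v) := fun i v hv => by
    linarith [halign i ud v, hud_NE i v hv]
  exact (hC_convex.subset (subset_univ _) (convex_pi fun i _ => hcvx i)).isMinOn_pi_of_le_update
    (hC_smooth.differentiable one_ne_zero ud) hcvx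
    (fun i _ => hud_mem i) hmin (fun i _ => hu i)

/-- Let `C` be convex and continuously differentiable, each individual cost
`C_i` continuously differentiable, and each feasible set `Ξ i` nonempty, compact and
convex. Under the alignment condition
`C(u_i', u_{-i}) − C(u) = C_i(u_i', u_{-i}) − C_i(u)`, every Nash equilibrium of the game
with costs `C_1, …, C_N` is a team-optimal solution. -/
theorem NE_is_team_optimal_aligned
    (n N : ℕ)
    (Ξ : Fin N → Set (EuclideanSpace ℝ (Fin n)))
    (C : (Fin N → EuclideanSpace ℝ (Fin n)) → ℝ)
    (Ci : Fin N → (Fin N → EuclideanSpace ℝ (Fin n)) → ℝ)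
    (hC_convex : ConvexOn ℝ Set.univ C)
    (hC_smooth : ContDiff ℝ 1 C)
    (hCi_smooth : ∀ i, ContDiff ℝ 1 (Ci i))
    (hne : ∀ i, (Ξ i).Nonempty)
    (hcpt : ∀ i, IsCompact (Ξ i))
    (hcvx : ∀ i, Convex ℝ (Ξ i))
    (halign : ∀ i (u : Fin N → EuclideanSpace ℝ (Fin n)) (v : EuclideanSpace ℝ (Fin n)),
      C (Function.update u i v) - C u = Ci i (Function.update u i v) - Ci i u)
    (ud : Fin N → EuclideanSpace ℝ (Fin n))
    (hud_mem : ∀ i, ud i ∈ Ξ i)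
    (hud_NE : ∀ i, ∀ v ∈ Ξ i, Ci i ud ≤ Ci i (Function.update ud i v)) :
    ∀ u : Fin N → EuclideanSpace ℝ (Fin n), (∀ i, u i ∈ Ξ i) → C ud ≤ C u :=
  NE_is_team_optimal_aligned_general n N Ξ C Ci hC_convex hC_smooth hcvx halign ud hud_mem hud_NE
end

section
/- Let K ⊆ ℝ^m be nonempty, closed and convex, and let G : ℝ^m → ℝ^m be κ-strongly monotone and ν-Lipschitz continuous (κ, ν > 0). Let u* ∈ K satisfy the variational inequality (u − u*)ᵀ G(u*) ≥ 0 for all u ∈ K, and define the projected-gradient residual h(u) := u − Π_K(u − G(u)). Then for every u ∈ K, κ·‖u − u*‖ ≤ (ν + 1)·‖h(u)‖. -/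
open RealInnerProductSpace

/-- `P` is the Euclidean (metric) projection onto the set `K`: `P x ∈ K` and `P x` is a
closest point of `K` to `x`. -/
def IsMetricProjection {m : ℕ} (K : Set (EuclideanSpace ℝ (Fin m)))
    (P : EuclideanSpace ℝ (Fin m) → EuclideanSpace ℝ (Fin m)) : Prop :=
  ∀ x, P x ∈ K ∧ ∀ y ∈ K, ‖x - P x‖ ≤ ‖x - y‖

/-!
Write `w = Π_K(u - G u)`, so that `h(u) = u - w`. The obtuse-angle characterisation of the
projection, tested at `u* ∈ K`, and the variational inequality, tested at `w ∈ K`, combine to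
`⟪G u - G u*, w - u*⟫ ≤ ⟪u - w, w - u*⟫ ≤ ‖h(u)‖ ‖u - u*‖`, while Lipschitz continuity bounds
`⟪G u - G u*, u - w⟫ ≤ ν ‖u - u*‖ ‖h(u)‖`. Adding the two and using strong monotonicity gives
`κ ‖u - u*‖² ≤ (ν + 1) ‖u - u*‖ ‖h(u)‖`; divide by `‖u - u*‖`.
-/

section

variable {E : Type*} [NormedAddCommGroup E] [InnerProductSpace ℝ E]

theorem real_inner_sub_le_zero_of_forall_norm_sub_le {K : Set E} (hK : Convex ℝ K)
    {x w : E} (hw : w ∈ K) (hmin : ∀ y ∈ K, ‖x - w‖ ≤ ‖x - y‖) :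
    ∀ y ∈ K, ⟪x - w, y - w⟫ ≤ 0 := by
  have : Nonempty K := ⟨⟨w, hw⟩⟩
  refine (norm_eq_iInf_iff_real_inner_le_zero hK hw).mp (le_antisymm ?_ ?_)
  · exact le_ciInf fun y => hmin y y.2
  · exact ciInf_le ⟨0, by rintro _ ⟨y, rfl⟩; exact norm_nonneg _⟩ (⟨w, hw⟩ : K)

theorem inner_sub_le_of_projected_residual (G : E → E) {ν : ℝ} {u ustar w : E}
    (hlip : ‖G u - G ustar‖ ≤ ν * ‖u - ustar‖)
    (hproj : ⟪u - G u - w, ustar - w⟫ ≤ 0) (hVI : 0 ≤ ⟪w - ustar, G ustar⟫) :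
    ⟪G u - G ustar, u - ustar⟫ ≤ (ν + 1) * ‖u - ustar‖ * ‖u - w‖ := by
  have hsplit : ⟪G u - G ustar, u - ustar⟫
      = ⟪G u - G ustar, u - w⟫ + ⟪u - w, u - ustar⟫ - ⟪u - w, u - w⟫
        + ⟪u - G u - w, ustar - w⟫ - ⟪w - ustar, G ustar⟫ := by
    simp only [inner_sub_left, inner_sub_right, real_inner_comm]
    ring
  have hGu : ⟪G u - G ustar, u - w⟫ ≤ ν * ‖u - ustar‖ * ‖u - w‖ :=
    (real_inner_le_norm _ _).trans (mul_le_mul_of_nonneg_right hlip (norm_nonneg _))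
  have hcs : ⟪u - w, u - ustar⟫ ≤ ‖u - w‖ * ‖u - ustar‖ := real_inner_le_norm _ _
  have hsq : 0 ≤ ⟪u - w, u - w⟫ := real_inner_self_nonneg
  rw [hsplit]
  linarith

end

theorem residual_error_bound_general
    (m : ℕ)
    (K : Set (EuclideanSpace ℝ (Fin m)))
    (hK_cv : Convex ℝ K)
    (G : EuclideanSpace ℝ (Fin m) → EuclideanSpace ℝ (Fin m))
    (κ ν : ℝ) (hν : 0 < ν)
    (hmono : ∀ x y, κ * ‖x - y‖ ^ 2 ≤ ⟪G x - G y, x - y⟫)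
    (hlip : ∀ x y, ‖G x - G y‖ ≤ ν * ‖x - y‖)
    (P : EuclideanSpace ℝ (Fin m) → EuclideanSpace ℝ (Fin m))
    (hP : IsMetricProjection K P)
    (ustar : EuclideanSpace ℝ (Fin m))
    (hustar_mem : ustar ∈ K)
    (hVI : ∀ u ∈ K, (0 : ℝ) ≤ ⟪u - ustar, G ustar⟫) :
    ∀ u ∈ K, κ * ‖u - ustar‖ ≤ (ν + 1) * ‖u - P (u - G u)‖ := by
  intro u _
  obtain ⟨hwK, hmin⟩ := hP (u - G u)
  have hproj := real_inner_sub_le_zero_of_forall_norm_sub_le hK_cv hwK hmin ustar hustar_mem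
  have key : κ * ‖u - ustar‖ * ‖u - ustar‖ ≤ (ν + 1) * ‖u - P (u - G u)‖ * ‖u - ustar‖ := by
    have := inner_sub_le_of_projected_residual G (hlip u ustar) hproj (hVI _ hwK)
    nlinarith [hmono u ustar]
  rcases (norm_nonneg (u - ustar)).eq_or_lt with hzero | hpos
  · rw [← hzero, mul_zero]
    have : 0 < ν + 1 := by linarith
    positivity
  · exact le_of_mul_le_mul_right key hpos

/-- Let `K ⊆ ℝ^m` be nonempty, closed and convex, `G` κ-strongly monotone and
ν-Lipschitz, `u* ∈ K` a solution of the variational inequality `(u − u*)ᵀG(u*) ≥ 0` for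
all `u ∈ K`, and `h(u) := u − Π_K(u − G(u))` the projected-gradient residual. Then for all
`u ∈ K`, `κ‖u − u*‖ ≤ (ν + 1)‖h(u)‖`. -/
theorem residual_error_bound
    (m : ℕ)
    (K : Set (EuclideanSpace ℝ (Fin m)))
    (hK_ne : K.Nonempty) (hK_cl : IsClosed K) (hK_cv : Convex ℝ K)
    (G : EuclideanSpace ℝ (Fin m) → EuclideanSpace ℝ (Fin m))
    (κ ν : ℝ) (hκ : 0 < κ) (hν : 0 < ν)
    (hmono : ∀ x y, κ * ‖x - y‖ ^ 2 ≤ ⟪G x - G y, x - y⟫)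
    (hlip : ∀ x y, ‖G x - G y‖ ≤ ν * ‖x - y‖)
    (P : EuclideanSpace ℝ (Fin m) → EuclideanSpace ℝ (Fin m))
    (hP : IsMetricProjection K P)
    (ustar : EuclideanSpace ℝ (Fin m))
    (hustar_mem : ustar ∈ K)
    (hVI : ∀ u ∈ K, (0 : ℝ) ≤ ⟪u - ustar, G ustar⟫) :
    ∀ u ∈ K, κ * ‖u - ustar‖ ≤ (ν + 1) * ‖u - P (u - G u)‖ :=
  residual_error_bound_general m K hK_cv G κ ν hν hmono hlip P hP ustar hustar_mem hVI
end

section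
/- Let K ⊆ ℝ^m be nonempty, closed and convex, let G : ℝ^m → ℝ^m be κ-strongly monotone and ν-Lipschitz continuous (κ, ν > 0), and let F : ℝ^m → ℝ^m. Suppose u* ∈ K satisfies u* = Π_K(u* − G(u*)) and u◇ ∈ K satisfies u◇ = Π_K(u◇ − F(u◇)). Then ‖u◇ − u*‖ ≤ ((ν + 1)/κ)·‖F(u◇) − G(u◇)‖. -/
/-
Both fixed points solve variational inequalities over `K`: `⟪G u*, y - u*⟫ ≥ 0` and
`⟪F u◇, y - u◇⟫ ≥ 0` for all `y ∈ K`. Testing each with the other point and adding the two,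
strong monotonicity of `G` gives `κ ‖u◇ - u*‖² ≤ ⟪G u◇ - F u◇, u◇ - u*⟫`, so Cauchy–Schwarz yields
`κ ‖u◇ - u*‖ ≤ ‖F u◇ - G u◇‖`; it remains to use `ν + 1 ≥ 1`.
-/

open RealInnerProductSpace

namespace IsMetricProjection

variable {m : ℕ} {K : Set (EuclideanSpace ℝ (Fin m))}
  {P : EuclideanSpace ℝ (Fin m) → EuclideanSpace ℝ (Fin m)}

theorem real_inner_sub_le_zero (hP : IsMetricProjection K P) (hK : Convex ℝ K)
    (x : EuclideanSpace ℝ (Fin m)) {y : EuclideanSpace ℝ (Fin m)} (hy : y ∈ K) :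
    ⟪x - P x, y - P x⟫ ≤ 0 := by
  obtain ⟨hmem, hmin⟩ := hP x
  have : Nonempty K := ⟨⟨P x, hmem⟩⟩
  have hbdd : BddBelow (Set.range fun w : K => ‖x - (w : EuclideanSpace ℝ (Fin m))‖) :=
    ⟨0, fun _ ⟨_, h⟩ => h ▸ norm_nonneg _⟩
  refine (norm_eq_iInf_iff_real_inner_le_zero hK hmem).mp ?_ y hy
  exact le_antisymm (le_ciInf fun w => hmin w w.2) (ciInf_le hbdd ⟨P x, hmem⟩)

theorem real_inner_nonneg_of_eq_apply_sub (hP : IsMetricProjection K P) (hK : Convex ℝ K)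
    {u g : EuclideanSpace ℝ (Fin m)} (hu : u = P (u - g)) {y : EuclideanSpace ℝ (Fin m)}
    (hy : y ∈ K) : 0 ≤ ⟪g, y - u⟫ := by
  have h := hP.real_inner_sub_le_zero hK (u - g) hy
  rw [← hu, sub_sub_cancel_left, inner_neg_left] at h
  linarith

end IsMetricProjection

theorem mul_norm_sub_le_of_strongMonotone_of_variational
    {E : Type*} [NormedAddCommGroup E] [InnerProductSpace ℝ E] {G F : E → E} {κ : ℝ} {u v : E}
    (hmono : κ * ‖v - u‖ ^ 2 ≤ ⟪G v - G u, v - u⟫)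
    (hu : 0 ≤ ⟪G u, v - u⟫) (hv : 0 ≤ ⟪F v, u - v⟫) :
    κ * ‖v - u‖ ≤ ‖F v - G v‖ := by
  have hv' : ⟪F v, v - u⟫ ≤ 0 := by
    rw [← neg_sub, inner_neg_right] at hv
    linarith
  have hcs : ⟪G v - F v, v - u⟫ ≤ ‖F v - G v‖ * ‖v - u‖ :=
    norm_sub_rev (G v) (F v) ▸ real_inner_le_norm _ _
  have hsq : κ * ‖v - u‖ ^ 2 ≤ ‖F v - G v‖ * ‖v - u‖ := by
    have hsplit : ⟪G v - G u, v - u⟫ = ⟪G v - F v, v - u⟫ + ⟪F v, v - u⟫ - ⟪G u, v - u⟫ := by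
      rw [inner_sub_left, inner_sub_left]
      ring
    linarith
  rcases (norm_nonneg (v - u)).eq_or_lt with h0 | h0
  · rw [← h0, mul_zero]
    exact norm_nonneg _
  · rw [sq, ← mul_assoc] at hsq
    exact le_of_mul_le_mul_right hsq h0

theorem fixed_point_deviation_bound_general
    (m : ℕ)
    (K : Set (EuclideanSpace ℝ (Fin m)))
    (hK_cv : Convex ℝ K)
    (G F : EuclideanSpace ℝ (Fin m) → EuclideanSpace ℝ (Fin m))
    (κ ν : ℝ) (hκ : 0 < κ) (hν : 0 < ν)
    (hmono : ∀ x y, κ * ‖x - y‖ ^ 2 ≤ ⟪G x - G y, x - y⟫)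
    (P : EuclideanSpace ℝ (Fin m) → EuclideanSpace ℝ (Fin m))
    (hP : IsMetricProjection K P)
    (ustar ud : EuclideanSpace ℝ (Fin m))
    (hustar_mem : ustar ∈ K) (hud_mem : ud ∈ K)
    (hustar_fix : ustar = P (ustar - G ustar))
    (hud_fix : ud = P (ud - F ud)) :
    ‖ud - ustar‖ ≤ ((ν + 1) / κ) * ‖F ud - G ud‖ := by
  have hbound : κ * ‖ud - ustar‖ ≤ ‖F ud - G ud‖ :=
    mul_norm_sub_le_of_strongMonotone_of_variational (hmono ud ustar)
      (hP.real_inner_nonneg_of_eq_apply_sub hK_cv hustar_fix hud_mem)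
      (hP.real_inner_nonneg_of_eq_apply_sub hK_cv hud_fix hustar_mem)
  calc ‖ud - ustar‖ ≤ ‖F ud - G ud‖ / κ := by
        rw [le_div_iff₀ hκ]
        linarith
    _ ≤ (ν + 1) / κ * ‖F ud - G ud‖ := by
        rw [div_mul_eq_mul_div]
        gcongr
        exact le_mul_of_one_le_left (norm_nonneg _) (by linarith)

/-- Let `K ⊆ ℝ^m` be nonempty, closed and convex, `G` κ-strongly monotone
and ν-Lipschitz, and `F : ℝ^m → ℝ^m`. If `u* ∈ K` satisfies `u* = Π_K(u* − G(u*))` and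
`u◇ ∈ K` satisfies `u◇ = Π_K(u◇ − F(u◇))`, then
`‖u◇ − u*‖ ≤ ((ν + 1)/κ)‖F(u◇) − G(u◇)‖`. -/
theorem fixed_point_deviation_bound
    (m : ℕ)
    (K : Set (EuclideanSpace ℝ (Fin m)))
    (hK_ne : K.Nonempty) (hK_cl : IsClosed K) (hK_cv : Convex ℝ K)
    (G F : EuclideanSpace ℝ (Fin m) → EuclideanSpace ℝ (Fin m))
    (κ ν : ℝ) (hκ : 0 < κ) (hν : 0 < ν)
    (hmono : ∀ x y, κ * ‖x - y‖ ^ 2 ≤ ⟪G x - G y, x - y⟫)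
    (hlip : ∀ x y, ‖G x - G y‖ ≤ ν * ‖x - y‖)
    (P : EuclideanSpace ℝ (Fin m) → EuclideanSpace ℝ (Fin m))
    (hP : IsMetricProjection K P)
    (ustar ud : EuclideanSpace ℝ (Fin m))
    (hustar_mem : ustar ∈ K) (hud_mem : ud ∈ K)
    (hustar_fix : ustar = P (ustar - G ustar))
    (hud_fix : ud = P (ud - F ud)) :
    ‖ud - ustar‖ ≤ ((ν + 1) / κ) * ‖F ud - G ud‖ :=
  fixed_point_deviation_bound_general m K hK_cv G F κ ν hκ hν hmono P hP ustar ud hustar_mem hud_mem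
    hustar_fix hud_fix
end

section
/- Let ζ : ℝ^m × ℝ^n → ℝ^n be continuously differentiable, and suppose there exists μ ∈ [0, 1) such that for every θ ∈ ℝ^m the map ζ(θ, ·) : ℝ^n → ℝ^n is μ-Lipschitz continuous. Let u : ℝ^m → ℝ^n assign to each θ the unique fixed point u(θ) = ζ(θ, u(θ)). Then: (i) for every θ, the matrix I − J_u ζ(θ, u(θ)) is invertible; (ii) u is continuously differentiable with Jacobian J u(θ) = (I − J_u ζ(θ, u(θ)))⁻¹ J_θ ζ(θ, u(θ)); and (iii) for any fixed θ, the matrix iteration z[p+1] = J_u ζ(θ, u(θ)) · z[p] + J_θ ζ(θ, u(θ)), started from any z[0] ∈ ℝ^{n×m}, converges to J u(θ). -/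
/-!
The fixed point `u θ` is the implicit function of `(θ, v) ↦ v - ζ (θ, v)`: its derivative in `v`
is `1 - J_u ζ`, which is invertible by the Neumann series because the Lipschitz bound gives
`‖J_u ζ‖ ≤ μ < 1`, so the implicit function theorem makes `u` as smooth as `ζ`. Differentiating
`u θ = ζ (θ, u θ)` shows that `J u(θ)` is a fixed point of the affine map
`A ↦ J_u ζ ∘ A + J_θ ζ`; solving for it gives the closed form, and since that map is a
`μ`-contraction, Banach's fixed point theorem gives the convergence of the iteration.
-/

open Filter Topology ContinuousLinearMap

section NormedSpace

variable {𝕜 : Type*} [NontriviallyNormedField 𝕜]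
  {E F G : Type*} [NormedAddCommGroup E] [NormedSpace 𝕜 E] [NormedAddCommGroup F] [NormedSpace 𝕜 F]
  [NormedAddCommGroup G] [NormedSpace 𝕜 G]

theorem DifferentiableAt.fderiv_prodMk_left {f : E × F → G} {x : E} {y : F}
    (hf : DifferentiableAt 𝕜 f (x, y)) :
    fderiv 𝕜 (fun x' => f (x', y)) x = fderiv 𝕜 f (x, y) ∘L inl 𝕜 E F :=
  (hf.hasFDerivAt.comp x (hasFDerivAt_prodMk_left x y)).fderiv

theorem DifferentiableAt.fderiv_prodMk_right {f : E × F → G} {x : E} {y : F}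
    (hf : DifferentiableAt 𝕜 f (x, y)) :
    fderiv 𝕜 (fun y' => f (x, y')) y = fderiv 𝕜 f (x, y) ∘L inr 𝕜 E F :=
  (hf.hasFDerivAt.comp y (hasFDerivAt_prodMk_right x y)).fderiv

theorem fderiv_comp_add_fderiv_eq_of_isFixedPt {ζ : E × F → F} {u : E → F} {x : E}
    (hζ : DifferentiableAt 𝕜 ζ (x, u x)) (hu : DifferentiableAt 𝕜 u x)
    (hfix : ∀ x, ζ (x, u x) = u x) :
    fderiv 𝕜 (fun v => ζ (x, v)) (u x) ∘L fderiv 𝕜 u x + fderiv 𝕜 (fun y => ζ (y, u x)) x =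
      fderiv 𝕜 u x := by
  have hgraph : HasFDerivAt (fun y => ζ (y, u y))
      (fderiv 𝕜 ζ (x, u x) ∘L (ContinuousLinearMap.id 𝕜 E).prod (fderiv 𝕜 u x)) x :=
    hζ.hasFDerivAt.comp x ((hasFDerivAt_id x).prodMk hu.hasFDerivAt)
  rw [show (fun y => ζ (y, u y)) = u from funext hfix] at hgraph
  rw [hζ.fderiv_prodMk_left, hζ.fderiv_prodMk_right]
  conv_rhs => rw [hgraph.fderiv]
  ext w
  simp [add_comm, ← comp_inl_add_comp_inr (fderiv 𝕜 ζ (x, u x)) (w, fderiv 𝕜 u x w)]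

theorem ContinuousLinearMap.tendsto_iterate_comp_add [CompleteSpace F] {B : F →L[𝕜] F}
    (hB : ‖B‖ < 1) {C X : E →L[𝕜] F} (hX : B ∘L X + C = X) (z₀ : E →L[𝕜] F) :
    Tendsto (fun p => (fun A => B ∘L A + C)^[p] z₀) atTop (𝓝 X) := by
  have hcontr : ContractingWith ‖B‖₊ (fun A => B ∘L A + C) := by
    refine ⟨by exact_mod_cast hB, LipschitzWith.of_dist_le_mul fun A A' => ?_⟩
    calc dist (B ∘L A + C) (B ∘L A' + C) = ‖B ∘L (A - A')‖ := by
          rw [dist_add_right, dist_eq_norm, comp_sub]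
      _ ≤ ‖B‖ * dist A A' := by rw [dist_eq_norm]; exact opNorm_comp_le B _
  rw [hcontr.fixedPoint_unique hX]
  exact hcontr.tendsto_iterate_fixedPoint z₀

end NormedSpace

theorem ContinuousLinearMap.eq_ringInverse_one_sub_comp {R : Type*} {E F : Type*}
    [Ring R] [TopologicalSpace E] [AddCommGroup E] [Module R E]
    [TopologicalSpace F] [AddCommGroup F] [Module R F] [IsTopologicalAddGroup F]
    {B : F →L[R] F} (hB : IsUnit (1 - B)) {C X : E →L[R] F} (hX : B ∘L X + C = X) :
    X = Ring.inverse (1 - B) ∘L C := by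
  have hC : (1 - B) ∘L X = C := by
    rw [sub_comp, one_def, id_comp, sub_eq_iff_eq_add', hX]
  rw [← hC, ← comp_assoc, ← mul_def, Ring.inverse_mul_cancel _ hB, one_def, id_comp]

section ImplicitFunction

variable {𝕜 : Type*} [RCLike 𝕜]
  {E F : Type*} [NormedAddCommGroup E] [NormedSpace 𝕜 E] [CompleteSpace E]
  [NormedAddCommGroup F] [NormedSpace 𝕜 F] [CompleteSpace F]

theorem contDiffAt_of_isFixedPt_unique {n : WithTop ℕ∞} (hn : n ≠ 0) {ζ : E × F → F} {u : E → F}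
    {x₀ : E} (hζ : ContDiffAt 𝕜 n ζ (x₀, u x₀)) (hfix : ζ (x₀, u x₀) = u x₀)
    (huniq : ∀ x v, ζ (x, v) = v → v = u x)
    (hunit : IsUnit (1 - fderiv 𝕜 (fun v => ζ (x₀, v)) (u x₀))) :
    ContDiffAt 𝕜 n u x₀ := by
  have hG : ContDiffAt 𝕜 n (fun p : E × F => p.2 - ζ p) (x₀, u x₀) := contDiffAt_snd.sub hζ
  have hG_inr : fderiv 𝕜 (fun p : E × F => p.2 - ζ p) (x₀, u x₀) ∘L inr 𝕜 E F =
      1 - fderiv 𝕜 (fun v => ζ (x₀, v)) (u x₀) := by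
    have hζd := hζ.differentiableAt hn
    have hGd : HasFDerivAt (fun p : E × F => p.2 - ζ p) (snd 𝕜 E F - fderiv 𝕜 ζ (x₀, u x₀))
        (x₀, u x₀) := hasFDerivAt_snd.sub hζd.hasFDerivAt
    rw [hGd.fderiv, hζd.fderiv_prodMk_right]
    ext v
    simp
  have hinv : (fderiv 𝕜 (fun p : E × F => p.2 - ζ p) (x₀, u x₀) ∘L inr 𝕜 E F).IsInvertible := by
    rw [hG_inr]
    exact ⟨ContinuousLinearEquiv.unitsEquiv 𝕜 F hunit.unit, rfl⟩
  refine (hG.contDiffAt_implicitFunction hn hinv).congr_of_eventuallyEq ?_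
  filter_upwards [hG.eventually_apply_implicitFunction hn hinv] with x hx
  refine (huniq x _ ?_).symm
  rw [hfix, sub_self, sub_eq_zero] at hx
  exact hx.symm

end ImplicitFunction

/-- Let `ζ : ℝ^m × ℝ^n → ℝ^n` be continuously differentiable and, for every
`θ`, μ-Lipschitz in its second argument with `μ ∈ [0,1)`. Let `u(θ)` be the unique fixed
point of `ζ(θ, ·)`. Then (i) `I − J_u ζ(θ, u(θ))` is invertible; (ii) `u` is continuously
differentiable with Jacobian `J u(θ) = (I − J_u ζ(θ, u(θ)))⁻¹ J_θ ζ(θ, u(θ))`; and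
(iii) the iteration `z[p+1] = J_u ζ(θ, u(θ)) z[p] + J_θ ζ(θ, u(θ))` converges to `J u(θ)`
from any initial matrix `z[0]`. -/
theorem fixed_point_jacobian_iteration
    (m n : ℕ)
    (ζ : EuclideanSpace ℝ (Fin m) × EuclideanSpace ℝ (Fin n) → EuclideanSpace ℝ (Fin n))
    (hζ : ContDiff ℝ 1 ζ)
    (μ : ℝ) (hμ0 : 0 ≤ μ) (hμ1 : μ < 1)
    (hlip : ∀ (θ : EuclideanSpace ℝ (Fin m)) (x y : EuclideanSpace ℝ (Fin n)),
      ‖ζ (θ, x) - ζ (θ, y)‖ ≤ μ * ‖x - y‖)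
    (u : EuclideanSpace ℝ (Fin m) → EuclideanSpace ℝ (Fin n))
    (hfix : ∀ θ, ζ (θ, u θ) = u θ)
    (huniq : ∀ θ v, ζ (θ, v) = v → v = u θ) :
    ContDiff ℝ 1 u ∧
    ∀ θ : EuclideanSpace ℝ (Fin m),
      IsUnit ((1 : EuclideanSpace ℝ (Fin n) →L[ℝ] EuclideanSpace ℝ (Fin n)) -
          fderiv ℝ (fun v => ζ (θ, v)) (u θ)) ∧
      fderiv ℝ u θ =
        (Ring.inverse
            ((1 : EuclideanSpace ℝ (Fin n) →L[ℝ] EuclideanSpace ℝ (Fin n)) -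
              fderiv ℝ (fun v => ζ (θ, v)) (u θ))).comp
          (fderiv ℝ (fun w => ζ (w, u θ)) θ) ∧
      ∀ z0 : EuclideanSpace ℝ (Fin m) →L[ℝ] EuclideanSpace ℝ (Fin n),
        Filter.Tendsto
          (fun p =>
            (fun A => (fderiv ℝ (fun v => ζ (θ, v)) (u θ)).comp A +
              fderiv ℝ (fun w => ζ (w, u θ)) θ)^[p] z0)
          Filter.atTop (nhds (fderiv ℝ u θ)) := by
  have hnorm : ∀ θ, ‖fderiv ℝ (fun v => ζ (θ, v)) (u θ)‖ < 1 := fun θ =>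
    (norm_fderiv_le_of_lip' ℝ hμ0 (.of_forall fun v => hlip θ v (u θ))).trans_lt hμ1
  have hunit : ∀ θ, IsUnit (1 - fderiv ℝ (fun v => ζ (θ, v)) (u θ)) := fun θ =>
    isUnit_one_sub_of_norm_lt_one (hnorm θ)
  have hu : ContDiff ℝ 1 u := contDiff_iff_contDiffAt.2 fun θ =>
    contDiffAt_of_isFixedPt_unique one_ne_zero hζ.contDiffAt (hfix θ) huniq (hunit θ)
  have hfixJ : ∀ θ, fderiv ℝ (fun v => ζ (θ, v)) (u θ) ∘L fderiv ℝ u θ +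
      fderiv ℝ (fun w => ζ (w, u θ)) θ = fderiv ℝ u θ := fun θ =>
    fderiv_comp_add_fderiv_eq_of_isFixedPt (hζ.differentiable one_ne_zero _)
      (hu.differentiable one_ne_zero θ) hfix
  exact ⟨hu, fun θ => ⟨hunit θ, eq_ringInverse_one_sub_comp (hunit θ) (hfixJ θ),
    tendsto_iterate_comp_add (hnorm θ) (hfixJ θ)⟩⟩
end

section
/- Consider the linear-quadratic team problem with team cost C(u) = Σ_{i=1}^N [ u_iᵀ Q_i u_i + u_iᵀ Σ_{j≠i} B_{ij} u_j + γᵀ u_i ], where each Q_i ∈ ℝ^{n×n} is symmetric, each B_{ij} ∈ ℝ^{n×n} is symmetric with B_{ij} = B_{ji}, and γ ∈ ℝ^n. Suppose each member's individual cost is C_i(u) = u_iᵀ Q_i u_i + 2 u_iᵀ Σ_{j≠i} B_{ij} u_j + γᵀ u_i. Then for every i and every u ∈ (ℝ^n)^N, the partial gradients coincide: ∇_{u_i} C_i(u) = ∇_{u_i} C(u) = 2 Q_i u_i + 2 Σ_{j≠i} B_{ij} u_j + γ. Consequently, if in addition C is convex on (ℝ^n)^N and each Ξ_i ⊆ ℝ^n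 is nonempty, compact and convex, then the set of Nash equilibria of the game with costs C_1, …, C_N coincides with the set of team-optimal solutions of the team problem with cost C. -/
/-!
Symmetry of the `B i j` makes the cross terms `⟪u k, B k i (u i)⟫`, `k ≠ i`, of the team cost
mirror images of member `i`'s own coupling terms; this is the factor `2` in `C_i`. Hence, as a
function of `u_i` alone, `C` and `C_i` differ by a constant: `C` is an exact potential of the
game, the partial gradients agree, and `u` is a Nash equilibrium iff every `u_i` minimises
`C (update u i ·)` over `Ξ i`. For a differentiable convex `C` on a product of convex sets,
these coordinatewise minima give `DC(u) (single i (w i - u i)) ≥ 0` for each `i`; summing over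
`i` gives `DC(u) (w - u) ≥ 0`, and the gradient inequality of convex functions turns this into
`C u ≤ C w`.
-/

open Function RealInnerProductSpace

theorem ConvexOn.add_fderiv_sub_le {E : Type*} [NormedAddCommGroup E] [NormedSpace ℝ E]
    {s : Set E} {f : E → ℝ} {f' : E →L[ℝ] ℝ} {x y : E}
    (hf : ConvexOn ℝ s f) (hx : x ∈ s) (hy : y ∈ s) (hf' : HasFDerivAt f f' x) :
    f x + f' (y - x) ≤ f y := by
  let l : ℝ →ᵃ[ℝ] E := AffineMap.lineMap x y
  have hline : ConvexOn ℝ (l ⁻¹' s) (f ∘ l) := hf.comp_affineMap l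
  have hderiv : HasDerivAt (f ∘ l) (f' (y - x)) 0 :=
    hf'.comp_hasDerivAt_of_eq (0 : ℝ) AffineMap.hasDerivAt_lineMap (by simp [l])
  have hl0 : l 0 = x := AffineMap.lineMap_apply_zero x y
  have hl1 : l 1 = y := AffineMap.lineMap_apply_one x y
  have := hline.le_slope_of_hasDerivAt (by simpa [hl0]) (by simpa [hl1]) one_pos hderiv
  simp only [slope, Function.comp_apply, hl0, hl1, sub_zero, inv_one, one_smul,
    vsub_eq_sub] at this
  linarith

section Pi

variable {ι : Type*} [Fintype ι] [DecidableEq ι] {E : ι → Type*}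
  [∀ i, NormedAddCommGroup (E i)] [∀ i, NormedSpace ℝ (E i)]
  {f : (∀ i, E i) → ℝ} {f' : (∀ i, E i) →L[ℝ] ℝ} {s : ∀ i, Set (E i)} {x : ∀ i, E i}

theorem IsMinOn.hasFDerivAt_single_sub_nonneg {i : ι} {y : E i} (hf' : HasFDerivAt f f' x)
    (hs : Convex ℝ (s i)) (hmin : IsMinOn (fun v => f (update x i v)) (s i) (x i))
    (hx : x i ∈ s i) (hy : y ∈ s i) :
    0 ≤ f' (Pi.single i (y - x i)) := by
  have hslice : HasFDerivAt (fun v => f (update x i v))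
      (f'.comp (.pi (Pi.single i (.id ℝ (E i))))) (x i) := by
    simpa using (update_eq_self i x ▸ hf').comp (x i) (hasFDerivAt_update x (x i))
  have := hmin.localize.hasFDerivWithinAt_nonneg hslice.hasFDerivWithinAt
    (sub_mem_posTangentConeAt_of_segment_subset (hs.segment_subset hx hy))
  convert this using 1
  rw [ContinuousLinearMap.comp_apply]
  congr 1
  ext j
  rcases eq_or_ne j i with rfl | hj <;> simp [*]

theorem ConvexOn.isMinOn_univ_pi_iff (hf : ConvexOn ℝ (Set.univ.pi s) f) (hf' : HasFDerivAt f f' x)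
    (hs : ∀ i, Convex ℝ (s i)) (hx : x ∈ Set.univ.pi s) :
    IsMinOn f (Set.univ.pi s) x ↔ ∀ i, IsMinOn (fun v => f (update x i v)) (s i) (x i) := by
  refine ⟨fun hmin i v hv => ?_, fun hmin y hy => ?_⟩
  · simpa using hmin ((Set.update_mem_pi_iff_of_mem hx).2 fun _ => hv)
  · have hdecomp : f' (y - x) = ∑ i, f' (Pi.single i (y i - x i)) := by
      rw [← map_sum, ← Finset.univ_sum_single (y - x)]; rfl
    have hnonneg : 0 ≤ f' (y - x) := hdecomp ▸ Finset.sum_nonneg fun i _ =>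
      (hmin i).hasFDerivAt_single_sub_nonneg hf' (hs i) (hx i trivial) (hy i trivial)
    have := hf.add_fderiv_sub_le hx hy hf'
    exact show f x ≤ f y by linarith

end Pi

section Gradient

variable {F : Type*} [NormedAddCommGroup F] [InnerProductSpace ℝ F] [CompleteSpace F]

theorem HasGradientAt.add_const {f : F → ℝ} {f' x : F} (h : HasGradientAt f f' x) (c : ℝ) :
    HasGradientAt (fun y => f y + c) f' x :=
  HasFDerivAt.add_const c h

theorem hasGradientAt_inner_self_apply_add {A : F →L[ℝ] F} (hA : (A : F →ₗ[ℝ] F).IsSymmetric)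
    (b x : F) : HasGradientAt (fun v => ⟪v, A v⟫ + ⟪b, v⟫) ((2 : ℝ) • A x + b) x := by
  rw [hasGradientAt_iff_hasFDerivAt]
  refine (((hasFDerivAt_id x).inner ℝ A.hasFDerivAt).add (innerSL ℝ b).hasFDerivAt).congr_fderiv ?_
  ext h
  have hsym : ⟪x, A h⟫ = ⟪A x, h⟫ := (hA x h).symm
  simp only [id_eq, add_apply, ContinuousLinearMap.comp_apply,
    ContinuousLinearMap.prod_apply, ContinuousLinearMap.id_apply, fderivInnerCLM_apply, hsym,
    real_inner_comm h (A x), coe_innerSL_apply, InnerProductSpace.toDual_apply_apply,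
    inner_add_left, real_inner_smul_left]
  ring

end Gradient

theorem Finset.sum_sum_erase_eq_add_sum_erase {ι M : Type*} [Fintype ι] [DecidableEq ι]
    [AddCommMonoid M] (g : ι → ι → M) (i : ι) :
    ∑ k, ∑ j ∈ univ.erase k, g k j =
      ∑ j ∈ univ.erase i, (g i j + g j i) +
        ∑ k ∈ univ.erase i, ∑ j ∈ (univ.erase k).erase i, g k j := by
  have hsplit : ∀ k ∈ univ.erase i,
      ∑ j ∈ univ.erase k, g k j = g k i + ∑ j ∈ (univ.erase k).erase i, g k j := fun k hk =>
    (add_sum_erase _ _ (mem_erase.2 ⟨(ne_of_mem_erase hk).symm, mem_univ i⟩)).symm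
  rw [← add_sum_erase _ _ (mem_univ i), sum_congr rfl hsplit, sum_add_distrib, sum_add_distrib]
  abel

section LinearQuadratic

variable {ι F : Type*} [Fintype ι] [DecidableEq ι] [NormedAddCommGroup F] [InnerProductSpace ℝ F]
  (Q : ι → F →L[ℝ] F) (B : ι → ι → F →L[ℝ] F) (γ : F)

def lqCoupling (u : ι → F) (i : ι) : F :=
  ∑ j ∈ Finset.univ.erase i, B i j (u j)

def lqTeamCost (u : ι → F) : ℝ :=
  ∑ i, (⟪u i, Q i (u i)⟫ + ⟪u i, lqCoupling B u i⟫ + ⟪γ, u i⟫)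

def lqMemberCost (i : ι) (u : ι → F) : ℝ :=
  ⟪u i, Q i (u i)⟫ + 2 * ⟪u i, lqCoupling B u i⟫ + ⟪γ, u i⟫

theorem lqCoupling_update_self (u : ι → F) (i : ι) (v : F) :
    lqCoupling B (update u i v) i = lqCoupling B u i :=
  Finset.sum_congr rfl fun j hj => by rw [update_of_ne (Finset.ne_of_mem_erase hj)]

theorem lqTeamCost_eq_lqMemberCost_add (hB : ∀ i j, (B i j : F →ₗ[ℝ] F).IsSymmetric)
    (hBcomm : ∀ i j, B i j = B j i) (u : ι → F) (i : ι) :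
    lqTeamCost Q B γ u = lqMemberCost Q B γ i u + ∑ k ∈ Finset.univ.erase i,
      (⟪u k, Q k (u k)⟫ + ∑ j ∈ (Finset.univ.erase k).erase i, ⟪u k, B k j (u j)⟫ + ⟪γ, u k⟫) := by
  have hswap : ∀ j, ⟪u j, B j i (u i)⟫ = ⟪u i, B i j (u j)⟫ := fun j => by
    rw [← ContinuousLinearMap.coe_coe, ← hB, real_inner_comm, hBcomm]; rfl
  have hcross := Finset.sum_sum_erase_eq_add_sum_erase (fun k j => ⟪u k, B k j (u j)⟫) i
  simp only [hswap, ← two_mul, ← Finset.mul_sum, ← inner_sum] at hcross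
  simp only [lqTeamCost, lqMemberCost, lqCoupling, inner_sum, Finset.sum_add_distrib] at hcross ⊢
  rw [hcross, ← Finset.add_sum_erase _ _ (Finset.mem_univ i),
    ← Finset.add_sum_erase _ (fun k => ⟪γ, u k⟫) (Finset.mem_univ i)]
  ring

theorem lqTeamCost_update_sub (hB : ∀ i j, (B i j : F →ₗ[ℝ] F).IsSymmetric)
    (hBcomm : ∀ i j, B i j = B j i) (u : ι → F) (i : ι) (v : F) :
    lqTeamCost Q B γ (update u i v) - lqTeamCost Q B γ u =
      lqMemberCost Q B γ i (update u i v) - lqMemberCost Q B γ i u := by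
  rw [lqTeamCost_eq_lqMemberCost_add Q B γ hB hBcomm _ i,
    lqTeamCost_eq_lqMemberCost_add Q B γ hB hBcomm u i]
  have hrest : ∀ k ∈ Finset.univ.erase i,
      ⟪update u i v k, Q k (update u i v k)⟫ +
        ∑ j ∈ (Finset.univ.erase k).erase i, ⟪update u i v k, B k j (update u i v j)⟫ +
          ⟪γ, update u i v k⟫ =
      ⟪u k, Q k (u k)⟫ + ∑ j ∈ (Finset.univ.erase k).erase i, ⟪u k, B k j (u j)⟫ + ⟪γ, u k⟫ :=
    fun k hk => by
      have hki := Finset.ne_of_mem_erase hk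
      simp only [update_of_ne hki]
      congr 2
      exact Finset.sum_congr rfl fun j hj => by rw [update_of_ne (Finset.ne_of_mem_erase hj)]
  rw [Finset.sum_congr rfl hrest]
  ring

theorem differentiable_lqTeamCost : Differentiable ℝ (lqTeamCost Q B γ) := by
  have hinner : Differentiable ℝ fun p : F × F => ⟪p.1, p.2⟫ :=
    differentiable_fst.inner ℝ differentiable_snd
  unfold lqTeamCost lqCoupling
  fun_prop

theorem isMinOn_lqTeamCost_update_iff (hB : ∀ i j, (B i j : F →ₗ[ℝ] F).IsSymmetric)
    (hBcomm : ∀ i j, B i j = B j i) (u : ι → F) (i : ι) (s : Set F) :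
    IsMinOn (fun v => lqTeamCost Q B γ (update u i v)) s (u i) ↔
      ∀ v ∈ s, lqMemberCost Q B γ i u ≤ lqMemberCost Q B γ i (update u i v) := by
  rw [isMinOn_iff]
  refine forall₂_congr fun v _ => ?_
  have := lqTeamCost_update_sub Q B γ hB hBcomm u i v
  simp only [update_eq_self]
  constructor <;> intro h <;> linarith

theorem lqMemberCost_update_self (u : ι → F) (i : ι) (v : F) :
    lqMemberCost Q B γ i (update u i v) = ⟪v, Q i v⟫ + ⟪(2 : ℝ) • lqCoupling B u i + γ, v⟫ := by
  rw [lqMemberCost, lqCoupling_update_self, update_self, inner_add_left, real_inner_smul_left,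
    real_inner_comm v (lqCoupling B u i)]
  ring

variable [CompleteSpace F]

theorem hasGradientAt_lqMemberCost_update {i : ι} (hQ : (Q i : F →ₗ[ℝ] F).IsSymmetric)
    (u : ι → F) (x : F) :
    HasGradientAt (fun v => lqMemberCost Q B γ i (update u i v))
      ((2 : ℝ) • Q i x + (2 : ℝ) • lqCoupling B u i + γ) x := by
  simp only [lqMemberCost_update_self, add_assoc]
  exact hasGradientAt_inner_self_apply_add hQ _ x

theorem hasGradientAt_lqTeamCost_update {i : ι} (hQ : (Q i : F →ₗ[ℝ] F).IsSymmetric)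
    (hB : ∀ i j, (B i j : F →ₗ[ℝ] F).IsSymmetric) (hBcomm : ∀ i j, B i j = B j i)
    (u : ι → F) (x : F) :
    HasGradientAt (fun v => lqTeamCost Q B γ (update u i v))
      ((2 : ℝ) • Q i x + (2 : ℝ) • lqCoupling B u i + γ) x := by
  have hpot : (fun v => lqTeamCost Q B γ (update u i v)) = fun v =>
      lqMemberCost Q B γ i (update u i v) + (lqTeamCost Q B γ u - lqMemberCost Q B γ i u) :=
    funext fun v => by linarith [lqTeamCost_update_sub Q B γ hB hBcomm u i v]
  rw [hpot]
  exact (hasGradientAt_lqMemberCost_update Q B γ hQ u x).add_const _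

end LinearQuadratic

/-- For the linear-quadratic team cost
`C(u) = Σ_i [u_iᵀQ_iu_i + u_iᵀ Σ_{j≠i} B_{ij} u_j + γᵀu_i]` with `Q_i` symmetric and
`B_{ij}` symmetric with `B_{ij} = B_{ji}`, and individual costs
`C_i(u) = u_iᵀQ_iu_i + 2u_iᵀ Σ_{j≠i} B_{ij} u_j + γᵀu_i`, the partial gradients coincide:
`∇_{u_i}C_i(u) = ∇_{u_i}C(u) = 2Q_iu_i + 2Σ_{j≠i}B_{ij}u_j + γ`. Consequently, if `C` is
convex and each `Ξ i` is nonempty, compact and convex, the set of Nash equilibria of the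
game with costs `C_1, …, C_N` coincides with the set of team-optimal solutions. -/
theorem linear_quadratic_NE_eq_team_optimal
    (n N : ℕ)
    (Q : Fin N → EuclideanSpace ℝ (Fin n) →L[ℝ] EuclideanSpace ℝ (Fin n))
    (B : Fin N → Fin N → EuclideanSpace ℝ (Fin n) →L[ℝ] EuclideanSpace ℝ (Fin n))
    (γ : EuclideanSpace ℝ (Fin n))
    (hQsymm : ∀ i (x y : EuclideanSpace ℝ (Fin n)), ⟪Q i x, y⟫ = ⟪x, Q i y⟫)
    (hBsymm : ∀ i j (x y : EuclideanSpace ℝ (Fin n)), ⟪B i j x, y⟫ = ⟪x, B i j y⟫)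
    (hBij : ∀ i j, B i j = B j i)
    (C : (Fin N → EuclideanSpace ℝ (Fin n)) → ℝ)
    (hC : ∀ u, C u = ∑ i,
      (⟪u i, Q i (u i)⟫ + ⟪u i, ∑ j ∈ Finset.univ.erase i, B i j (u j)⟫ + ⟪γ, u i⟫))
    (Ci : Fin N → (Fin N → EuclideanSpace ℝ (Fin n)) → ℝ)
    (hCi : ∀ i u, Ci i u =
      ⟪u i, Q i (u i)⟫ + 2 * ⟪u i, ∑ j ∈ Finset.univ.erase i, B i j (u j)⟫ + ⟪γ, u i⟫) :
    (∀ i (u : Fin N → EuclideanSpace ℝ (Fin n)),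
      gradient (fun v => Ci i (Function.update u i v)) (u i) =
        gradient (fun v => C (Function.update u i v)) (u i) ∧
      gradient (fun v => C (Function.update u i v)) (u i) =
        (2 : ℝ) • Q i (u i) +
          (2 : ℝ) • (∑ j ∈ Finset.univ.erase i, B i j (u j)) + γ) ∧
    (∀ Ξ : Fin N → Set (EuclideanSpace ℝ (Fin n)),
      ConvexOn ℝ Set.univ C →
      (∀ i, (Ξ i).Nonempty) → (∀ i, IsCompact (Ξ i)) → (∀ i, Convex ℝ (Ξ i)) →
      {u : Fin N → EuclideanSpace ℝ (Fin n) |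
          (∀ i, u i ∈ Ξ i) ∧
          ∀ i, ∀ v ∈ Ξ i, Ci i u ≤ Ci i (Function.update u i v)} =
      {u : Fin N → EuclideanSpace ℝ (Fin n) |
          (∀ i, u i ∈ Ξ i) ∧
          ∀ w : Fin N → EuclideanSpace ℝ (Fin n), (∀ i, w i ∈ Ξ i) → C u ≤ C w}) := by
  obtain rfl : C = lqTeamCost Q B γ := funext hC
  obtain rfl : Ci = lqMemberCost Q B γ := funext fun i => funext (hCi i)
  refine ⟨fun i u => ?_, fun Ξ hconv _ _ hΞ => ?_⟩
  · have hteam := (hasGradientAt_lqTeamCost_update Q B γ (hQsymm i) hBsymm hBij u (u i)).gradient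
    exact ⟨by rw [(hasGradientAt_lqMemberCost_update Q B γ (hQsymm i) u (u i)).gradient, hteam],
      hteam⟩
  · ext u
    refine and_congr_right fun hu => ?_
    have hconv' : ConvexOn ℝ (Set.univ.pi Ξ) (lqTeamCost Q B γ) :=
      hconv.subset (Set.subset_univ _) (convex_pi fun i _ => hΞ i)
    rw [← forall_congr' fun i => isMinOn_lqTeamCost_update_iff Q B γ hBsymm hBij u i (Ξ i),
      ← hconv'.isMinOn_univ_pi_iff (differentiable_lqTeamCost Q B γ u).hasFDerivAt hΞ
        fun i _ => hu i]
    simp only [isMinOn_iff, Set.mem_univ_pi]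
end
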